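/- arXiv:2406.08010 — 2 statements merged into one kernel-verified Lean document; each statement's English description precedes it below -/
import Mathlib

section
/- There exist no real numbers s1, s2 such that σ(s1 - s2) = σ(s1)·(1 - σ(s2)), where σ(t) = 1/(1+e^{-t}) is the logistic sigmoid. -/
noncomputable def sigmoid (t : ℝ) : ℝ := 1 / (1 + Real.exp (-t))

/-!
With `a = exp s₁` and `b = exp s₂` one has `σ(s₁ - s₂) = a / (a + b)` and
`σ(s₁) (1 - σ(s₂)) = a / ((1 + a) (1 + b))`. The second denominator exceeds the first by
`1 + a b > 0`, so the right-hand side is always strictly smaller than the left-hand side.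
-/

theorem sigmoid_eq_exp_div (t : ℝ) : sigmoid t = Real.exp t / (1 + Real.exp t) := by
  rw [sigmoid, Real.exp_neg]
  field_simp
  ring

theorem one_sub_sigmoid (t : ℝ) : 1 - sigmoid t = 1 / (1 + Real.exp t) := by
  rw [sigmoid_eq_exp_div]
  field_simp
  ring

theorem sigmoid_sub (x y : ℝ) : sigmoid (x - y) = Real.exp x / (Real.exp x + Real.exp y) := by
  rw [sigmoid_eq_exp_div, Real.exp_sub]
  field_simp
  ring

theorem sigmoid_mul_one_sub_sigmoid_lt_sigmoid_sub (x y : ℝ) :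
    sigmoid x * (1 - sigmoid y) < sigmoid (x - y) := by
  have hx := Real.exp_pos x
  have hy := Real.exp_pos y
  calc sigmoid x * (1 - sigmoid y) = Real.exp x / ((1 + Real.exp x) * (1 + Real.exp y)) := by
        rw [sigmoid_eq_exp_div, one_sub_sigmoid]
        field_simp
    _ < Real.exp x / (Real.exp x + Real.exp y) :=
        div_lt_div_of_pos_left hx (by positivity) (by nlinarith [mul_pos hx hy])
    _ = sigmoid (x - y) := (sigmoid_sub x y).symm

theorem no_common_solution :
    ¬ ∃ s1 s2 : ℝ, sigmoid (s1 - s2) = sigmoid s1 * (1 - sigmoid s2) := by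
  rintro ⟨s1, s2, h⟩
  exact (sigmoid_mul_one_sub_sigmoid_lt_sigmoid_sub s1 s2).ne' h
end

section
/- For all real s1, s2, the equation σ(s1 - s2) = σ(s1)·(1 - σ(s2)) is equivalent to e^{-s1} + e^{s2} = 0, which is impossible since exponentials are positive. -/
lemma sigmoid_eq_real_sigmoid : sigmoid = Real.sigmoid := by
  funext t
  rw [sigmoid, Real.sigmoid_def, one_div]

/-- With `x = exp (-a)` and `y = exp (-b)` the two sides are `(1 + x y)⁻¹` and
`((1 + x) (1 + y))⁻¹ = (1 + x y + (x + y))⁻¹`. -/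
lemma Real.sigmoid_add_eq_mul_iff (a b : ℝ) :
    Real.sigmoid (a + b) = Real.sigmoid a * Real.sigmoid b ↔
      Real.exp (-a) + Real.exp (-b) = 0 := by
  rw [Real.sigmoid_def, Real.sigmoid_def, Real.sigmoid_def, ← mul_inv, inv_inj, neg_add,
    Real.exp_add]
  constructor <;> intro h <;> linarith

theorem pair_point_incompatible_iff (s1 s2 : ℝ) :
    (sigmoid (s1 - s2) = sigmoid s1 * (1 - sigmoid s2) ↔
      Real.exp (-s1) + Real.exp s2 = 0) ∧
    0 < Real.exp (-s1) + Real.exp s2 := by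
  refine ⟨?_, by positivity⟩
  rw [sigmoid_eq_real_sigmoid, ← Real.sigmoid_neg, sub_eq_add_neg,
    Real.sigmoid_add_eq_mul_iff, neg_neg]
end
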